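/- Fix c₀ ≠ 0 and let 𝔥 : [−1, 1] → ℝ be continuous and positive, with minimum H_m > 0 and maximum H_M. Then every (x, y) ∈ Γ₁ satisfies H_m ≤ f₁(x, y) ≤ H_M; moreover Γ₁ is a bounded subset of ℝ², its closure in ℝ² is contained in Γ₁ ∪ {p₁, −p₁}, and consequently the set Γ₁ ∪ {p₁, −p₁} is compact. -/

import Mathlib

/-- The function `F₁` whose zero set in the phase space `Θ₁ = (0,∞) × (−1,1)`
is the nullcline `Γ₁`. -/
noncomputable def helicoidalF1 (c₀ : ℝ) (𝔥 : ℝ → ℝ) (p : ℝ × ℝ) : ℝ :=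
  2 * 𝔥 (p.1 * p.2 / Real.sqrt (c₀ ^ 2 * p.2 ^ 2 + p.1 ^ 2))
      * (p.1 ^ 2 + c₀ ^ 2 * p.2 ^ 2) ^ ((3 : ℝ) / 2)
    - (p.1 ^ 2 + 2 * c₀ ^ 2 * p.2 ^ 2) * Real.sqrt (1 - p.2 ^ 2)

/-- The function `f₁` whose level curves describe the nullclines of the
helicoidal CMC system (with `ε = 1`). -/
noncomputable def helicoidalf1 (c₀ : ℝ) (p : ℝ × ℝ) : ℝ :=
  (p.1 ^ 2 + 2 * c₀ ^ 2 * p.2 ^ 2) * Real.sqrt (1 - p.2 ^ 2)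
    / (2 * (p.1 ^ 2 + c₀ ^ 2 * p.2 ^ 2) ^ ((3 : ℝ) / 2))

/-!
On `Θ₁` the quantity `D = x² + c₀²y²` is positive and `F₁ = 2 D^{3/2} (𝔥(t) − f₁)` with
`t = xy/√(c₀²y² + x²) ∈ [−1, 1]`, so on `Γ₁` we have `f₁ = 𝔥(t) ∈ [H_m, H_M]`.
Since `x² + 2c₀²y² ≤ 2D` we get `f₁ ≤ 1/√D`, whence `√D ≤ 1/H_m`; since `x² + 2c₀²y² ≥ D` we get
`√(1 − y²) ≤ 2 f₁ √D ≤ 2 H_M √D`, which (as `c₀ ≠ 0`) keeps `Γ₁` away from the origin.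
These closed conditions cut out a compact set on which `F₁` is continuous, so every limit point
of `Γ₁` is a zero of `F₁` in it. There `y = ±1` is impossible, as `f₁` would vanish, and on
`x = 0` the equation `f₁ = 𝔥(0)` reads `√(1 − y²) = 𝔥(0) |c₀ y|`, i.e. `y² = 1/(1 + c₀²𝔥(0)²)`.
-/

open Set Bornology

lemma Real.rpow_three_halves {D : ℝ} (hD : 0 ≤ D) : D ^ ((3 : ℝ) / 2) = D * √D := by
  rw [show (3 : ℝ) / 2 = 1 + 1 / 2 by norm_num, Real.rpow_add' hD (by norm_num), Real.rpow_one,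
    Real.sqrt_eq_rpow]

lemma Bornology.IsBounded.isCompact_union_of_closure_subset {E : Type*} [PseudoMetricSpace E]
    [ProperSpace E] {s t : Set E} (hs : IsBounded s) (ht : IsCompact t)
    (h : closure s ⊆ s ∪ t) : IsCompact (s ∪ t) := by
  have : s ∪ t = closure s ∪ t :=
    (union_subset_union_left t subset_closure).antisymm (union_subset h subset_union_right)
  rw [this]
  exact hs.isCompact_closure.union ht

namespace Helicoidal

variable {c₀ : ℝ} {𝔥 : ℝ → ℝ}

noncomputable def arg (c₀ : ℝ) (p : ℝ × ℝ) : ℝ := p.1 * p.2 / √(c₀ ^ 2 * p.2 ^ 2 + p.1 ^ 2)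

def nullcline (c₀ : ℝ) (𝔥 : ℝ → ℝ) : Set (ℝ × ℝ) :=
  {p | p ∈ Ioi 0 ×ˢ Ioo (-1) 1 ∧ helicoidalF1 c₀ 𝔥 p = 0}

noncomputable def pole (c₀ : ℝ) (𝔥 : ℝ → ℝ) : ℝ × ℝ := (0, 1 / √(1 + c₀ ^ 2 * 𝔥 0 ^ 2))

def envelope (c₀ Hm HM : ℝ) : Set (ℝ × ℝ) :=
  {p | p.1 ∈ Icc 0 Hm⁻¹ ∧ p.2 ∈ Icc (-1) 1 ∧
    √(1 - p.2 ^ 2) ≤ 2 * HM * √(p.1 ^ 2 + c₀ ^ 2 * p.2 ^ 2)}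

lemma arg_mem_Icc {p : ℝ × ℝ} (hy : p.2 ∈ Icc (-1) 1) : arg c₀ p ∈ Icc (-1) 1 := by
  rw [mem_Icc, ← abs_le] at hy ⊢
  rw [arg, abs_div, abs_of_nonneg (Real.sqrt_nonneg _)]
  refine div_le_one_of_le₀ ?_ (Real.sqrt_nonneg _)
  calc |p.1 * p.2| = |p.1| * |p.2| := abs_mul _ _
    _ ≤ |p.1| := mul_le_of_le_one_right (abs_nonneg _) hy
    _ = √(p.1 ^ 2) := (Real.sqrt_sq_eq_abs _).symm
    _ ≤ √(c₀ ^ 2 * p.2 ^ 2 + p.1 ^ 2) := Real.sqrt_le_sqrt (by nlinarith [sq_nonneg (c₀ * p.2)])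

@[simp]
lemma arg_zero_left (c₀ y : ℝ) : arg c₀ (0, y) = 0 := by simp [arg]

lemma helicoidalF1_eq {p : ℝ × ℝ} (hD : 0 < p.1 ^ 2 + c₀ ^ 2 * p.2 ^ 2) :
    helicoidalF1 c₀ 𝔥 p =
      2 * (p.1 ^ 2 + c₀ ^ 2 * p.2 ^ 2) ^ ((3 : ℝ) / 2) * (𝔥 (arg c₀ p) - helicoidalf1 c₀ p) := by
  have := Real.rpow_pos_of_pos hD ((3 : ℝ) / 2)
  unfold helicoidalF1 helicoidalf1 arg
  rw [mul_sub, mul_div_cancel₀ _ (by positivity)]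
  ring

lemma helicoidalF1_eq_zero_iff {p : ℝ × ℝ} (hD : 0 < p.1 ^ 2 + c₀ ^ 2 * p.2 ^ 2) :
    helicoidalF1 c₀ 𝔥 p = 0 ↔ helicoidalf1 c₀ p = 𝔥 (arg c₀ p) := by
  have := Real.rpow_pos_of_pos hD ((3 : ℝ) / 2)
  rw [helicoidalF1_eq hD, mul_eq_zero, or_iff_right (by positivity), sub_eq_zero, eq_comm]

lemma helicoidalf1_le_inv_sqrt {p : ℝ × ℝ} (hD : 0 < p.1 ^ 2 + c₀ ^ 2 * p.2 ^ 2) :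
    helicoidalf1 c₀ p ≤ (√(p.1 ^ 2 + c₀ ^ 2 * p.2 ^ 2))⁻¹ := by
  have hs : √(1 - p.2 ^ 2) ≤ 1 := Real.sqrt_le_one.mpr (by nlinarith)
  have hNs : (p.1 ^ 2 + 2 * c₀ ^ 2 * p.2 ^ 2) * √(1 - p.2 ^ 2) ≤ 2 * (p.1 ^ 2 + c₀ ^ 2 * p.2 ^ 2) :=
    calc _ ≤ (p.1 ^ 2 + 2 * c₀ ^ 2 * p.2 ^ 2) * 1 := mul_le_mul_of_nonneg_left hs (by positivity)
      _ ≤ _ := by nlinarith [sq_nonneg p.1]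
  have := Real.sqrt_pos.mpr hD
  rw [helicoidalf1, Real.rpow_three_halves hD.le]
  calc _ ≤ 2 * (p.1 ^ 2 + c₀ ^ 2 * p.2 ^ 2) / (2 * ((p.1 ^ 2 + c₀ ^ 2 * p.2 ^ 2) *
          √(p.1 ^ 2 + c₀ ^ 2 * p.2 ^ 2))) := div_le_div_of_nonneg_right hNs (by positivity)
    _ = _ := by field_simp

lemma sqrt_one_sub_sq_le_helicoidalf1 {p : ℝ × ℝ} (hD : 0 < p.1 ^ 2 + c₀ ^ 2 * p.2 ^ 2) :
    √(1 - p.2 ^ 2) ≤ 2 * helicoidalf1 c₀ p * √(p.1 ^ 2 + c₀ ^ 2 * p.2 ^ 2) := by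
  have := Real.sqrt_pos.mpr hD
  have hrhs : 2 * helicoidalf1 c₀ p * √(p.1 ^ 2 + c₀ ^ 2 * p.2 ^ 2) =
      (p.1 ^ 2 + 2 * c₀ ^ 2 * p.2 ^ 2) * √(1 - p.2 ^ 2) / (p.1 ^ 2 + c₀ ^ 2 * p.2 ^ 2) := by
    rw [helicoidalf1, Real.rpow_three_halves hD.le]
    field_simp
  rw [hrhs, le_div_iff₀ hD]
  nlinarith [Real.sqrt_nonneg (1 - p.2 ^ 2), sq_nonneg (c₀ * p.2)]

lemma sq_snd_lt_one_of_helicoidalf1_pos {p : ℝ × ℝ} (h : 0 < helicoidalf1 c₀ p) : p.2 ^ 2 < 1 := by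
  by_contra! hy
  rw [helicoidalf1, Real.sqrt_eq_zero_of_nonpos (by linarith)] at h
  simp at h

lemma helicoidalf1_zero_left (c₀ y : ℝ) :
    helicoidalf1 c₀ (0, y) = √(1 - y ^ 2) / √(c₀ ^ 2 * y ^ 2) := by
  simp only [helicoidalf1, ne_eq, OfNat.ofNat_ne_zero, not_false_eq_true, zero_pow, zero_add]
  rcases (by positivity : 0 ≤ c₀ ^ 2 * y ^ 2).eq_or_lt with hD | hD
  · simp [← hD]
  · have := Real.sqrt_pos.mpr hD
    have hcy : c₀ * y ≠ 0 := by rw [← sq_pos_iff, mul_pow]; exact hD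
    rw [Real.rpow_three_halves hD.le]
    field_simp
    exact mul_div_cancel_left₀ _ hcy

lemma helicoidalf1_mem_Icc_of_helicoidalF1_eq_zero {Hm HM : ℝ}
    (h𝔥 : MapsTo 𝔥 (Icc (-1) 1) (Icc Hm HM)) {p : ℝ × ℝ}
    (hD : 0 < p.1 ^ 2 + c₀ ^ 2 * p.2 ^ 2) (hy : p.2 ∈ Icc (-1) 1)
    (hF : helicoidalF1 c₀ 𝔥 p = 0) : helicoidalf1 c₀ p ∈ Icc Hm HM := by
  rw [(helicoidalF1_eq_zero_iff hD).mp hF]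
  exact h𝔥 (arg_mem_Icc hy)

lemma mem_envelope_of_helicoidalF1_eq_zero {Hm HM : ℝ} (hHm : 0 < Hm)
    (h𝔥 : MapsTo 𝔥 (Icc (-1) 1) (Icc Hm HM)) {p : ℝ × ℝ} (hx : 0 < p.1)
    (hy : p.2 ∈ Icc (-1) 1) (hF : helicoidalF1 c₀ 𝔥 p = 0) : p ∈ envelope c₀ Hm HM := by
  have hD : 0 < p.1 ^ 2 + c₀ ^ 2 * p.2 ^ 2 := by positivity
  obtain ⟨hmin, hmax⟩ := helicoidalf1_mem_Icc_of_helicoidalF1_eq_zero h𝔥 hD hy hF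
  have hsqrt : √(p.1 ^ 2 + c₀ ^ 2 * p.2 ^ 2) ≤ Hm⁻¹ :=
    (le_inv_comm₀ hHm (Real.sqrt_pos.mpr hD)).mp (hmin.trans (helicoidalf1_le_inv_sqrt hD))
  refine ⟨⟨hx.le, ?_⟩, hy, ?_⟩
  · calc p.1 = √(p.1 ^ 2) := (Real.sqrt_sq hx.le).symm
      _ ≤ √(p.1 ^ 2 + c₀ ^ 2 * p.2 ^ 2) :=
          Real.sqrt_le_sqrt (le_add_of_nonneg_right (by positivity))
      _ ≤ Hm⁻¹ := hsqrt
  · calc √(1 - p.2 ^ 2) ≤ 2 * helicoidalf1 c₀ p * √(p.1 ^ 2 + c₀ ^ 2 * p.2 ^ 2) :=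
          sqrt_one_sub_sq_le_helicoidalf1 hD
      _ ≤ 2 * HM * √(p.1 ^ 2 + c₀ ^ 2 * p.2 ^ 2) := by gcongr

lemma pos_of_mem_envelope {Hm HM : ℝ} (hc₀ : c₀ ≠ 0) {p : ℝ × ℝ} (hp : p ∈ envelope c₀ Hm HM) :
    0 < p.1 ^ 2 + c₀ ^ 2 * p.2 ^ 2 := by
  by_contra! h
  have hy : p.2 ^ 2 = 0 := (mul_eq_zero.mp (show c₀ ^ 2 * p.2 ^ 2 = 0 by
    nlinarith [sq_nonneg p.1, sq_nonneg (c₀ * p.2)])).resolve_left (pow_ne_zero 2 hc₀)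
  have hx : p.1 ^ 2 = 0 := by nlinarith [sq_nonneg p.1]
  have := hp.2.2
  norm_num [hx, hy] at this

lemma isClosed_envelope {Hm HM : ℝ} : IsClosed (envelope c₀ Hm HM) := by
  change IsClosed (Prod.fst ⁻¹' Icc 0 Hm⁻¹ ∩ (Prod.snd ⁻¹' Icc (-1) 1 ∩
    {p | √(1 - p.2 ^ 2) ≤ 2 * HM * √(p.1 ^ 2 + c₀ ^ 2 * p.2 ^ 2)}))
  exact (isClosed_Icc.preimage continuous_fst).inter
    ((isClosed_Icc.preimage continuous_snd).inter (isClosed_le (by fun_prop) (by fun_prop)))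

lemma isBounded_envelope {Hm HM : ℝ} : IsBounded (envelope c₀ Hm HM) :=
  (isCompact_Icc.prod isCompact_Icc).isBounded.subset
    (show envelope c₀ Hm HM ⊆ Icc 0 Hm⁻¹ ×ˢ Icc (-1) 1 from fun _ hp => ⟨hp.1, hp.2.1⟩)

lemma continuousOn_helicoidalF1 (hcont : ContinuousOn 𝔥 (Icc (-1) 1)) :
    ContinuousOn (helicoidalF1 c₀ 𝔥) {p | p.2 ∈ Icc (-1) 1 ∧ 0 < p.1 ^ 2 + c₀ ^ 2 * p.2 ^ 2} := by
  have harg : ContinuousOn (arg c₀) {p | p.2 ∈ Icc (-1) 1 ∧ 0 < p.1 ^ 2 + c₀ ^ 2 * p.2 ^ 2} :=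
    ContinuousOn.div (by fun_prop) (by fun_prop) fun p hp =>
      (Real.sqrt_pos.mpr (by linarith [hp.2])).ne'
  have h𝔥arg := hcont.comp harg fun p hp => arg_mem_Icc hp.1
  unfold helicoidalF1
  exact ((continuousOn_const.mul h𝔥arg).mul
    ((Real.continuous_rpow_const (by norm_num)).comp (by fun_prop)).continuousOn).sub
    (by fun_prop)

lemma eq_pole_or_eq_neg_pole {y : ℝ} (hD : 0 < c₀ ^ 2 * y ^ 2) (hy : y ^ 2 ≤ 1)
    (hF : helicoidalF1 c₀ 𝔥 (0, y) = 0) : (0, y) = pole c₀ 𝔥 ∨ (0, y) = -pole c₀ 𝔥 := by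
  have h := (helicoidalF1_eq_zero_iff (by simpa using hD)).mp hF
  rw [helicoidalf1_zero_left, arg_zero_left, div_eq_iff (Real.sqrt_pos.mpr hD).ne'] at h
  have hsq : 1 - y ^ 2 = 𝔥 0 ^ 2 * (c₀ ^ 2 * y ^ 2) := by
    have := congrArg (· ^ 2) h
    simpa [mul_pow, Real.sq_sqrt, hD.le, sub_nonneg.mpr hy] using this
  have hk : 0 < 1 + c₀ ^ 2 * 𝔥 0 ^ 2 := by positivity
  have hy2 : y ^ 2 = (1 / √(1 + c₀ ^ 2 * 𝔥 0 ^ 2)) ^ 2 := by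
    rw [div_pow, one_pow, Real.sq_sqrt hk.le, eq_div_iff hk.ne']
    linarith
  rcases sq_eq_sq_iff_eq_or_eq_neg.mp hy2 with h | h
  · left; simp [pole, h]
  · right; simp [pole, h]

lemma mem_nullcline_or_eq_pole {Hm HM : ℝ} (hc₀ : c₀ ≠ 0) (hHm : 0 < Hm)
    (h𝔥 : MapsTo 𝔥 (Icc (-1) 1) (Icc Hm HM)) {p : ℝ × ℝ} (hp : p ∈ envelope c₀ Hm HM)
    (hF : helicoidalF1 c₀ 𝔥 p = 0) : p ∈ nullcline c₀ 𝔥 ∪ {pole c₀ 𝔥, -pole c₀ 𝔥} := by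
  have hD := pos_of_mem_envelope hc₀ hp
  obtain ⟨⟨hx, -⟩, hy, -⟩ := hp
  rcases hx.eq_or_lt with hx | hx
  · obtain ⟨x, y⟩ := p
    obtain rfl : x = 0 := hx.symm
    exact Or.inr (eq_pole_or_eq_neg_pole (by simpa using hD) ((sq_le_one_iff_abs_le_one y).mpr
      (abs_le.mpr hy)) hF)
  · have hf1 := hHm.trans_le (helicoidalf1_mem_Icc_of_helicoidalF1_eq_zero h𝔥 hD hy hF).1
    have hy1 := abs_lt.mp ((sq_lt_one_iff_abs_lt_one _).mp (sq_snd_lt_one_of_helicoidalf1_pos hf1))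
    exact Or.inl ⟨⟨hx, hy1⟩, hF⟩

end Helicoidal

open Helicoidal

theorem helicoidal_nullcline_compact_general (c₀ : ℝ) (hc₀ : c₀ ≠ 0) (𝔥 : ℝ → ℝ)
    (hcont : ContinuousOn 𝔥 (Set.Icc (-1) 1))
    (Hm HM : ℝ) (hHm : 0 < Hm)
    (hmin : ∀ t ∈ Set.Icc (-1 : ℝ) 1, Hm ≤ 𝔥 t)
    (hmax : ∀ t ∈ Set.Icc (-1 : ℝ) 1, 𝔥 t ≤ HM) :
    let Θ₁ : Set (ℝ × ℝ) := Set.Ioi 0 ×ˢ Set.Ioo (-1) 1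
    let Γ₁ : Set (ℝ × ℝ) := {p | p ∈ Θ₁ ∧ helicoidalF1 c₀ 𝔥 p = 0}
    let p₁ : ℝ × ℝ := (0, 1 / Real.sqrt (1 + c₀ ^ 2 * (𝔥 0) ^ 2))
    (∀ p ∈ Γ₁, Hm ≤ helicoidalf1 c₀ p ∧ helicoidalf1 c₀ p ≤ HM) ∧
    Bornology.IsBounded Γ₁ ∧
    closure Γ₁ ⊆ Γ₁ ∪ {p₁, -p₁} ∧
    IsCompact (Γ₁ ∪ {p₁, -p₁}) := by
  intro Θ₁ Γ₁ p₁
  have h𝔥 : MapsTo 𝔥 (Icc (-1) 1) (Icc Hm HM) := fun t ht => ⟨hmin t ht, hmax t ht⟩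
  have hΓ₁ : Γ₁ ⊆ envelope c₀ Hm HM ∩ helicoidalF1 c₀ 𝔥 ⁻¹' {0} := fun p ⟨⟨hx, hy⟩, hF⟩ =>
    ⟨mem_envelope_of_helicoidalF1_eq_zero hHm h𝔥 hx (Ioo_subset_Icc_self hy) hF, hF⟩
  have hbdd : IsBounded Γ₁ := isBounded_envelope.subset fun p hp => (hΓ₁ hp).1
  have hclosed : IsClosed (envelope c₀ Hm HM ∩ helicoidalF1 c₀ 𝔥 ⁻¹' {0}) :=
    ((continuousOn_helicoidalF1 hcont).mono fun p hp => ⟨hp.2.1, pos_of_mem_envelope hc₀ hp⟩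
      ).preimage_isClosed_of_isClosed isClosed_envelope isClosed_singleton
  have hclosure : closure Γ₁ ⊆ Γ₁ ∪ {p₁, -p₁} :=
    (closure_minimal hΓ₁ hclosed).trans fun p hp => mem_nullcline_or_eq_pole hc₀ hHm h𝔥 hp.1 hp.2
  refine ⟨fun p hp => ?_, hbdd, hclosure,
    hbdd.isCompact_union_of_closure_subset (toFinite _).isCompact hclosure⟩
  obtain ⟨⟨hx, hy⟩, hF⟩ := hp
  exact helicoidalf1_mem_Icc_of_helicoidalF1_eq_zero h𝔥
    (add_pos_of_pos_of_nonneg (pow_pos hx 2) (by positivity)) (Ioo_subset_Icc_self hy) hF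

/-- If `𝔥` is continuous and positive on `[−1,1]` with minimum
`H_m > 0` and maximum `H_M`, then every point of `Γ₁` satisfies
`H_m ≤ f₁ ≤ H_M`, `Γ₁` is bounded, its closure is contained in
`Γ₁ ∪ {p₁, −p₁}`, and `Γ₁ ∪ {p₁, −p₁}` is compact. -/
theorem helicoidal_nullcline_compact (c₀ : ℝ) (hc₀ : c₀ ≠ 0) (𝔥 : ℝ → ℝ)
    (hcont : ContinuousOn 𝔥 (Set.Icc (-1) 1))
    (Hm HM : ℝ) (hHm : 0 < Hm)
    (hmin : ∀ t ∈ Set.Icc (-1 : ℝ) 1, Hm ≤ 𝔥 t)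
    (hmax : ∀ t ∈ Set.Icc (-1 : ℝ) 1, 𝔥 t ≤ HM)
    (hminatt : ∃ t ∈ Set.Icc (-1 : ℝ) 1, 𝔥 t = Hm)
    (hmaxatt : ∃ t ∈ Set.Icc (-1 : ℝ) 1, 𝔥 t = HM) :
    let Θ₁ : Set (ℝ × ℝ) := Set.Ioi 0 ×ˢ Set.Ioo (-1) 1
    let Γ₁ : Set (ℝ × ℝ) := {p | p ∈ Θ₁ ∧ helicoidalF1 c₀ 𝔥 p = 0}
    let p₁ : ℝ × ℝ := (0, 1 / Real.sqrt (1 + c₀ ^ 2 * (𝔥 0) ^ 2))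
    (∀ p ∈ Γ₁, Hm ≤ helicoidalf1 c₀ p ∧ helicoidalf1 c₀ p ≤ HM) ∧
    Bornology.IsBounded Γ₁ ∧
    closure Γ₁ ⊆ Γ₁ ∪ {p₁, -p₁} ∧
    IsCompact (Γ₁ ∪ {p₁, -p₁}) :=
  helicoidal_nullcline_compact_general c₀ hc₀ 𝔥 hcont Hm HM hHm hmin hmax
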